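/- arXiv:1001.1329 — 9 statements merged into one kernel-verified Lean document; each statement's English description precedes it below -/
import Mathlib

section
/- Let p and q be coprime positive integers and let n be an integer with 1 ≤ n ≤ pq−1 such that n is divisible by neither p nor q. Then exactly one of the two numbers n and pq−n can be written in the form iq + jp with integers i > 0 and j > 0. -/
/-! Reduce `i` modulo `p`: every `m` is `i * q + j * p` with `0 ≤ i < p`, and then `m` is a
positive combination exactly when `0 < j`, since any other representation shifts `i` by a
nonnegative multiple of `p` and `j` down by the same multiple of `q`. For `pq - n` one gets
`(p - i) * q + (-j) * p`, and `j ≠ 0` when `q ∤ n`, so exactly one of `j`, `-j` is positive. -/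

namespace Int

def IsPosComb (p q m : ℤ) : Prop :=
  ∃ i j : ℤ, 0 < i ∧ 0 < j ∧ m = i * q + j * p

theorem exists_emod_mul_add_mul_of_isCoprime {p q : ℤ} (hp : 0 < p) (hpq : IsCoprime p q)
    (m : ℤ) : ∃ i j : ℤ, 0 ≤ i ∧ i < p ∧ m = i * q + j * p := by
  obtain ⟨u, v, huv⟩ := hpq
  refine ⟨m * v % p, m * u + m * v / p * q, emod_nonneg _ hp.ne', emod_lt_of_pos _ hp, ?_⟩
  rw [emod_def]
  linear_combination (-m) * huv

theorem isPosComb_iff_pos {p q m i j : ℤ} (hp : 0 < p) (hq : 0 ≤ q) (hpq : IsCoprime p q)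
    (hi : 0 < i) (hip : i < p) (hm : m = i * q + j * p) : IsPosComb p q m ↔ 0 < j := by
  refine ⟨?_, fun hj => ⟨i, j, hi, hj, hm⟩⟩
  rintro ⟨i₁, j₁, hi₁, hj₁, hm₁⟩
  obtain ⟨k, hk⟩ : p ∣ i₁ - i :=
    hpq.dvd_of_dvd_mul_right ⟨j - j₁, by linear_combination hm - hm₁⟩
  have hk₀ : 0 ≤ k := by nlinarith
  have hj : j = j₁ + k * q := by
    apply mul_right_cancel₀ hp.ne'
    linear_combination hm₁ - hm + q * hk
  exact hj ▸ add_pos_of_pos_of_nonneg hj₁ (mul_nonneg hk₀ hq)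

end Int

theorem exactly_one_representable_general
    (p q n : ℤ) (hp : 0 < p) (hq : 0 < q) (hpq : IsCoprime p q)
    (hnp : ¬ p ∣ n) (hnq : ¬ q ∣ n) :
    Xor' (∃ i j : ℤ, 0 < i ∧ 0 < j ∧ n = i * q + j * p)
         (∃ i j : ℤ, 0 < i ∧ 0 < j ∧ p * q - n = i * q + j * p) := by
  obtain ⟨i, j, hi, hip, hn⟩ := Int.exists_emod_mul_add_mul_of_isCoprime hp hpq n
  have hi : 0 < i := lt_of_le_of_ne hi fun h => hnp ⟨j, by rw [hn, ← h]; ring⟩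
  have hj : j ≠ 0 := fun h => hnq ⟨i, by rw [hn, h]; ring⟩
  have hA : Int.IsPosComb p q n ↔ 0 < j := Int.isPosComb_iff_pos hp hq.le hpq hi hip hn
  have hB : Int.IsPosComb p q (p * q - n) ↔ 0 < -j :=
    Int.isPosComb_iff_pos (i := p - i) hp hq.le hpq (by omega) (by omega) (by rw [hn]; ring)
  change Xor (Int.IsPosComb p q n) (Int.IsPosComb p q (p * q - n))
  rw [xor_def, hA, hB]
  omega

/-- Let `p` and `q` be coprime positive integers and let `n` be an integer with
`1 ≤ n ≤ pq − 1` such that `n` is divisible by neither `p` nor `q`. Then exactly one of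
the two numbers `n` and `pq − n` can be written as `iq + jp` with integers `i > 0`, `j > 0`. -/
theorem exactly_one_representable
    (p q n : ℤ) (hp : 0 < p) (hq : 0 < q) (hpq : IsCoprime p q)
    (hn1 : 1 ≤ n) (hn2 : n ≤ p * q - 1) (hnp : ¬ p ∣ n) (hnq : ¬ q ∣ n) :
    Xor' (∃ i j : ℤ, 0 < i ∧ 0 < j ∧ n = i * q + j * p)
         (∃ i j : ℤ, 0 < i ∧ 0 < j ∧ p * q - n = i * q + j * p) :=
  exactly_one_representable_general p q n hp hq hpq hnp hnq
end

section
/- Let p and q be coprime positive integers and let n be an integer with 0 < n < pq such that n is divisible by neither p nor q. Then the sets L(n) and L(pq+n) are not both nonempty. -/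
/-!
Subtracting a point of `L(n)` from a point of `L(pq + n)` gives a pair `(x, y)` with
`|x| ≤ p`, `|y| ≤ q` and `xq + yp = pq`. By coprimality `x = ap` and `y = bq` with `a + b = 1`
and `|a|, |b| ≤ 1`, so the difference is `(p, 0)` or `(0, q)`. In the first case the point of
`L(n)` is `(0, j)`, whence `n = jp`; in the second it is `(i, 0)`, whence `n = iq`.
-/

/-- For coprime positive integers `p` and `q` and an integer `m`, `L p q m` is the set of
pairs `(i, j)` of integers with `0 ≤ i ≤ p`, `0 ≤ j ≤ q` and `iq + jp = m`. -/
def L (p q m : ℤ) : Set (ℤ × ℤ) :=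
  {ij | 0 ≤ ij.1 ∧ ij.1 ≤ p ∧ 0 ≤ ij.2 ∧ ij.2 ≤ q ∧ ij.1 * q + ij.2 * p = m}

lemma abs_le_one_of_abs_mul_le_self {R : Type*} [Ring R] [LinearOrder R] [IsStrictOrderedRing R]
    {p a : R} (hp : 0 < p) (h : |p * a| ≤ p) : |a| ≤ 1 := by
  rw [abs_mul, abs_of_pos hp] at h
  exact (mul_le_iff_le_one_right hp).1 h

lemma eq_self_zero_or_zero_self_of_mul_add_mul_eq_mul {p q x y : ℤ} (hp : 0 < p) (hq : 0 < q)
    (hpq : IsCoprime p q) (hx : |x| ≤ p) (hy : |y| ≤ q) (h : x * q + y * p = p * q) :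
    (x = p ∧ y = 0) ∨ (x = 0 ∧ y = q) := by
  obtain ⟨a, rfl⟩ : p ∣ x := hpq.dvd_of_dvd_mul_right ⟨q - y, by linear_combination h⟩
  obtain ⟨b, rfl⟩ : q ∣ y := hpq.symm.dvd_of_dvd_mul_right ⟨p - p * a, by linear_combination h⟩
  have hab : a + b = 1 :=
    mul_left_cancel₀ (mul_pos hp hq).ne' (by linear_combination h)
  have ha := abs_le_one_of_abs_mul_le_self hp hx
  have hb := abs_le_one_of_abs_mul_le_self hq hy
  rw [abs_le] at ha hb
  obtain rfl | rfl : a = 1 ∨ a = 0 := by omega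
  · exact .inl ⟨mul_one p, by rw [show b = 0 by omega, mul_zero]⟩
  · exact .inr ⟨mul_zero p, by rw [show b = 1 by omega, mul_one]⟩

theorem not_both_nonempty_general
    (p q n : ℤ) (hp : 0 < p) (hq : 0 < q) (hpq : IsCoprime p q)
    (hnp : ¬ p ∣ n) (hnq : ¬ q ∣ n) :
    ¬ ((L p q n).Nonempty ∧ (L p q (p * q + n)).Nonempty) := by
  rintro ⟨⟨⟨i, j⟩, hi0, hip, hj0, hjq, hij⟩, ⟨⟨i', j'⟩, hi0', hip', hj0', hjq', hij'⟩⟩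
  have hx : |i' - i| ≤ p := abs_sub_le_iff.2 ⟨by linarith, by linarith⟩
  have hy : |j' - j| ≤ q := abs_sub_le_iff.2 ⟨by linarith, by linarith⟩
  rcases eq_self_zero_or_zero_self_of_mul_add_mul_eq_mul hp hq hpq hx hy
      (by linear_combination hij' - hij) with ⟨hx, -⟩ | ⟨-, hy⟩
  · obtain rfl : i = 0 := by linarith
    exact hnp ⟨j, by linear_combination -hij⟩
  · obtain rfl : j = 0 := by linarith
    exact hnq ⟨i, by linear_combination -hij⟩

/-- If `p` and `q` are coprime positive integers and `0 < n < pq` with `n` divisible by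
neither `p` nor `q`, then `L(n)` and `L(pq + n)` are not both nonempty. -/
theorem not_both_nonempty
    (p q n : ℤ) (hp : 0 < p) (hq : 0 < q) (hpq : IsCoprime p q)
    (hn1 : 0 < n) (hn2 : n < p * q) (hnp : ¬ p ∣ n) (hnq : ¬ q ∣ n) :
    ¬ ((L p q n).Nonempty ∧ (L p q (p * q + n)).Nonempty) :=
  not_both_nonempty_general p q n hp hq hpq hnp hnq
end

section
/- Let p and q be coprime positive integers and let n be an integer with 0 < n < pq such that n is divisible by neither p nor q. Then at least one of the sets L(n) and L(pq+n) is nonempty. -/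
theorem IsCoprime.exists_mem_Ico_mul_add_mul_eq {p q : ℤ} (hp : 0 < p) (hpq : IsCoprime p q)
    (m : ℤ) : ∃ i ∈ Set.Ico 0 p, ∃ j, i * q + j * p = m := by
  obtain ⟨a, b, hab⟩ := hpq
  refine ⟨m * b % p, ⟨Int.emod_nonneg _ hp.ne', Int.emod_lt_of_pos _ hp⟩, m * a + m * b / p * q, ?_⟩
  rw [Int.emod_def]
  linear_combination m * hab

theorem at_least_one_nonempty_general
    (p q n : ℤ) (hp : 0 < p) (hq : 0 < q) (hpq : IsCoprime p q)
    (hn1 : 0 < n) (hn2 : n < p * q) :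
    (L p q n).Nonempty ∨ (L p q (p * q + n)).Nonempty := by
  obtain ⟨i, ⟨hi0, hip⟩, j, hsum⟩ := hpq.exists_mem_Ico_mul_add_mul_eq hp n
  have hiq : i * q < p * q := mul_lt_mul_of_pos_right hip hq
  have hjq : j < q := by nlinarith [mul_nonneg hi0 hq.le]
  have hqj : -q < j := by nlinarith
  rcases le_or_gt 0 j with hj | hj
  · exact Or.inl ⟨(i, j), hi0, hip.le, hj, hjq.le, hsum⟩
  · exact Or.inr ⟨(i, j + q), hi0, hip.le, by linarith, by linarith, by linear_combination hsum⟩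

/-- If `p` and `q` are coprime positive integers and `0 < n < pq` with `n` divisible by
neither `p` nor `q`, then at least one of `L(n)` and `L(pq + n)` is nonempty. -/
theorem at_least_one_nonempty
    (p q n : ℤ) (hp : 0 < p) (hq : 0 < q) (hpq : IsCoprime p q)
    (hn1 : 0 < n) (hn2 : n < p * q) (hnp : ¬ p ∣ n) (hnq : ¬ q ∣ n) :
    (L p q n).Nonempty ∨ (L p q (p * q + n)).Nonempty :=
  at_least_one_nonempty_general p q n hp hq hpq hn1 hn2
end

section
/- Let p and q be coprime positive integers and let n be an integer with 0 < n < pq such that n is divisible by p or by q. Then both L(n) and L(pq+n) contain exactly one element. -/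
theorem L_subsingleton {p q m : ℤ} (hp : 0 < p) (hpq : IsCoprime p q) (hm : m ≠ p * q) :
    (L p q m).Subsingleton := by
  rintro ⟨i, j⟩ ⟨hi0, hip, hj0, hjq, hij⟩ ⟨i', j'⟩ ⟨hi0', hip', hj0', hjq', hij'⟩
  dsimp only at *
  obtain ⟨c, hc⟩ : p ∣ i - i' := hpq.dvd_of_dvd_mul_right ⟨j' - j, by linarith⟩
  have hj : j' - j = c * q :=
    mul_left_cancel₀ hp.ne' (by linear_combination hij' - hij + q * hc)
  have hc_le : c ≤ 1 := by nlinarith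
  have hc_ge : -1 ≤ c := by nlinarith
  interval_cases c
  · exact absurd (by nlinarith) hm
  · ext <;> linarith
  · exact absurd (by nlinarith) hm

theorem existsUnique_mem_L {p q m : ℤ} (hp : 0 < p) (hpq : IsCoprime p q) (hm : m ≠ p * q)
    (x : ℤ × ℤ) (hx : x ∈ L p q m) : ∃! x : ℤ × ℤ, x ∈ L p q m :=
  ⟨x, hx, fun _ hy => L_subsingleton hp hpq hm hy hx⟩

/-- If `p` and `q` are coprime positive integers and `0 < n < pq` with `n` divisible by
`p` or by `q`, then both `L(n)` and `L(pq + n)` contain exactly one element. -/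
theorem both_singletons
    (p q n : ℤ) (hp : 0 < p) (hq : 0 < q) (hpq : IsCoprime p q)
    (hn1 : 0 < n) (hn2 : n < p * q) (hdvd : p ∣ n ∨ q ∣ n) :
    (∃! x : ℤ × ℤ, x ∈ L p q n) ∧ (∃! x : ℤ × ℤ, x ∈ L p q (p * q + n)) := by
  have hn : n ≠ p * q := hn2.ne
  have hn' : p * q + n ≠ p * q := (lt_add_of_pos_right _ hn1).ne'
  rcases hdvd with ⟨k, rfl⟩ | ⟨k, rfl⟩
  · have hk0 : 0 < k := pos_of_mul_pos_right hn1 hp.le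
    have hkq : k < q := lt_of_mul_lt_mul_left hn2 hp.le
    exact ⟨existsUnique_mem_L hp hpq hn (0, k) ⟨le_rfl, hp.le, hk0.le, hkq.le, by ring⟩,
      existsUnique_mem_L hp hpq hn' (p, k) ⟨hp.le, le_rfl, hk0.le, hkq.le, by ring⟩⟩
  · have hk0 : 0 < k := pos_of_mul_pos_right hn1 hq.le
    have hkp : k < p := lt_of_mul_lt_mul_left (hn2.trans_eq (mul_comm p q)) hq.le
    exact ⟨existsUnique_mem_L hp hpq hn (k, 0) ⟨hk0.le, hkp.le, le_rfl, hq.le, by ring⟩,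
      existsUnique_mem_L hp hpq hn' (k, q) ⟨hk0.le, hkp.le, hq.le, le_rfl, by ring⟩⟩
end

section
/- Let p and q be coprime positive integers. Then for every integer n with 0 < n < pq, j(n) = −j(pq−n). -/
open scoped Classical

/-- The signature jump function `j_{p,q}(n/pq)` of the `(p,q)` torus knot:
`0` if `p ∣ n` or `q ∣ n`; `1` if `n = qx + py` with `0 < x < p`, `0 < y < q`;
`−1` otherwise. -/
noncomputable def torusJump (p q n : ℤ) : ℤ :=
  if p ∣ n ∨ q ∣ n then 0
  else if ∃ x y : ℤ, 0 < x ∧ x < p ∧ 0 < y ∧ y < q ∧ n = q * x + p * y then 1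
  else -1

private lemma rep_not_both (p q : ℤ) (hpq : IsCoprime p q) (n : ℤ)
    (h1 : ∃ x y : ℤ, 0 < x ∧ x < p ∧ 0 < y ∧ y < q ∧ n = q * x + p * y)
    (h2 : ∃ x y : ℤ, 0 < x ∧ x < p ∧ 0 < y ∧ y < q ∧ p * q - n = q * x + p * y) :
    False := by
  obtain ⟨x, y, hx0, hxp, hy0, hyq, hn⟩ := h1
  obtain ⟨x', y', hx0', hxp', hy0', hyq', hn'⟩ := h2
  have hsum : p * q = q * (x + x') + p * (y + y') := by linarith
  have hdvd : p ∣ q * (x + x') := ⟨q - (y + y'), by ring_nf; linarith⟩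
  have hpx : p ∣ (x + x') := (IsCoprime.dvd_of_dvd_mul_left hpq hdvd)
  obtain ⟨k, hk⟩ := hpx
  have hk1 : k = 1 := by nlinarith
  have : p * (y + y') = 0 := by
    have : q * (x + x') = q * p := by rw [hk, hk1]; ring
    linarith
  nlinarith

private lemma rep_or (p q : ℤ) (hp : 0 < p) (hq : 0 < q) (hpq : IsCoprime p q)
    (n : ℤ) (hn : 0 < n) (hnpq : n < p * q) (hpn : ¬ p ∣ n) (hqn : ¬ q ∣ n) :
    (∃ x y : ℤ, 0 < x ∧ x < p ∧ 0 < y ∧ y < q ∧ n = q * x + p * y) ∨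
    (∃ x y : ℤ, 0 < x ∧ x < p ∧ 0 < y ∧ y < q ∧ p * q - n = q * x + p * y) := by
  obtain ⟨a, b, hab⟩ := hpq
  -- x₀ = (b * n) % p satisfies q * x₀ ≡ n [mod p]
  set x₀ := (b * n) % p with hx₀def
  have hx₀0 : 0 ≤ x₀ := Int.emod_nonneg _ (ne_of_gt hp)
  have hx₀p : x₀ < p := Int.emod_lt_of_pos _ hp
  have hcong : p ∣ n - q * x₀ := by
    have h1 : p ∣ b * n - x₀ := Int.dvd_self_sub_of_emod_eq rfl
    obtain ⟨c, hc⟩ := h1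
    refine ⟨a * n + q * c, ?_⟩
    linear_combination q * hc - n * hab
  obtain ⟨y, hy⟩ := hcong
  -- n = q * x₀ + p * y
  have hn_eq : n = q * x₀ + p * y := by linarith
  have hx₀ne : x₀ ≠ 0 := by
    intro h
    apply hpn
    rw [h, mul_zero] at hn_eq
    exact ⟨y, by linarith⟩
  have hx₀pos : 0 < x₀ := lt_of_le_of_ne hx₀0 (Ne.symm hx₀ne)
  have hyne : y ≠ 0 := by
    intro h
    apply hqn
    rw [h, mul_zero] at hn_eq
    exact ⟨x₀, by linarith⟩
  have hylt : y < q := by nlinarith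
  have hygt : -q < y := by nlinarith
  rcases lt_or_gt_of_ne hyne with hyneg | hypos
  · right
    refine ⟨p - x₀, -y, by linarith, by linarith, by linarith, by linarith, by linarith [hn_eq]⟩
    
  · left
    exact ⟨x₀, y, hx₀pos, hx₀p, hypos, hylt, hn_eq⟩

/-- For coprime positive integers `p` and `q` and any `0 < n < pq`,
`j(n) = −j(pq − n)`. -/
theorem torusJump_antisymm
    (p q : ℤ) (hp : 0 < p) (hq : 0 < q) (hpq : IsCoprime p q) :
    ∀ n : ℤ, 0 < n → n < p * q → torusJump p q n = - torusJump p q (p * q - n) := by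
  intro n hn hnpq
  have hdp : p ∣ n ↔ p ∣ p * q - n := by
    constructor <;> intro h
    · exact dvd_sub (Dvd.intro q rfl) h
    · have := dvd_sub (Dvd.intro q rfl) h
      simpa using this
  have hdq : q ∣ n ↔ q ∣ p * q - n := by
    constructor <;> intro h
    · exact dvd_sub (Dvd.intro_left p rfl) h
    · have := dvd_sub (Dvd.intro_left p rfl) h
      simpa using this
  by_cases hd : p ∣ n ∨ q ∣ n
  · have hd' : p ∣ p * q - n ∨ q ∣ p * q - n := hd.imp hdp.mp hdq.mp
    simp [torusJump, hd, hd']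
  · have hd' : ¬ (p ∣ p * q - n ∨ q ∣ p * q - n) := by
      intro h
      exact hd (h.imp hdp.mpr hdq.mpr)
    push_neg at hd
    by_cases hr : ∃ x y : ℤ, 0 < x ∧ x < p ∧ 0 < y ∧ y < q ∧ n = q * x + p * y
    · have hr' : ¬ ∃ x y : ℤ, 0 < x ∧ x < p ∧ 0 < y ∧ y < q ∧ p * q - n = q * x + p * y :=
        fun h => rep_not_both p q hpq n hr h
      have h0 : ¬ (p ∣ n ∨ q ∣ n) := by tauto
      rw [torusJump, torusJump, if_neg h0, if_neg hd', if_pos hr, if_neg hr']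
      norm_num
    · have hr' : ∃ x y : ℤ, 0 < x ∧ x < p ∧ 0 < y ∧ y < q ∧ p * q - n = q * x + p * y :=
        (rep_or p q hp hq hpq n hn hnpq hd.1 hd.2).resolve_left hr
      have h0 : ¬ (p ∣ n ∨ q ∣ n) := by tauto
      rw [torusJump, torusJump, if_neg h0, if_neg hd', if_neg hr, if_pos hr']
end

section
/- Let p and q be coprime positive integers. Then 2·|S| = (p−1)(q−1), where |S| is the cardinality of S. -/
/-!
The map `(x, y) ↦ qx + py` is injective on the box `0 < x < p`, `0 < y < q` (coprimality), so `S`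
is in bijection with the box points of value below `pq`. The reflection
`(x, y) ↦ (p - x, q - y)` preserves the box and sends the value `v` to `2pq - v`, while `pq` itself
is never attained since `p ∤ qx`. Hence exactly half of the `(p - 1)(q - 1)` box points lie below
`pq`.
-/

open scoped Classical

open Finset

namespace Sylvester

variable {p q : ℤ}

noncomputable def box (p q : ℤ) : Finset (ℤ × ℤ) := Ioo 0 p ×ˢ Ioo 0 q

def form (p q : ℤ) (z : ℤ × ℤ) : ℤ := q * z.1 + p * z.2

def reflect (p q : ℤ) (z : ℤ × ℤ) : ℤ × ℤ := (p - z.1, q - z.2)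

lemma mem_box {z : ℤ × ℤ} : z ∈ box p q ↔ 0 < z.1 ∧ z.1 < p ∧ 0 < z.2 ∧ z.2 < q := by
  simp only [box, mem_product, mem_Ioo, and_assoc]

lemma card_box (hp : 0 < p) (hq : 0 < q) : ((box p q).card : ℤ) = (p - 1) * (q - 1) := by
  rw [box, card_product, Nat.cast_mul, Int.card_Ioo, Int.card_Ioo, sub_zero, sub_zero,
    Int.toNat_of_nonneg (by omega), Int.toNat_of_nonneg (by omega)]

lemma form_injOn_box (hpq : IsCoprime p q) : Set.InjOn (form p q) (box p q) := by
  rintro ⟨x₁, y₁⟩ h₁ ⟨x₂, y₂⟩ h₂ h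
  rw [mem_coe, mem_box] at h₁ h₂
  simp only [form] at h
  have hdvd : p ∣ x₁ - x₂ := hpq.dvd_of_dvd_mul_left ⟨y₂ - y₁, by linear_combination h⟩
  have hx : x₁ = x₂ := sub_eq_zero.mp (Int.eq_zero_of_abs_lt_dvd hdvd (abs_sub_lt_iff.mpr
    ⟨by omega, by omega⟩))
  have hy : y₁ = y₂ := mul_left_cancel₀ (by omega : p ≠ 0) (by rw [hx] at h; linarith)
  rw [hx, hy]

lemma form_ne_mul_of_mem_box (hpq : IsCoprime p q) {z : ℤ × ℤ} (hz : z ∈ box p q) :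
    form p q z ≠ p * q := by
  rw [mem_box] at hz
  intro h
  have hdvd : p ∣ z.1 := hpq.dvd_of_dvd_mul_left ⟨q - z.2, by rw [form] at h; linarith⟩
  have := Int.le_of_dvd hz.1 hdvd
  omega

lemma reflect_mem_box {z : ℤ × ℤ} (hz : z ∈ box p q) : reflect p q z ∈ box p q := by
  rw [mem_box] at hz ⊢
  simp only [reflect]
  omega

lemma reflect_reflect (z : ℤ × ℤ) : reflect p q (reflect p q z) = z := by
  simp [reflect]

lemma form_reflect (z : ℤ × ℤ) : form p q (reflect p q z) = 2 * (p * q) - form p q z := by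
  simp only [form, reflect]
  ring

lemma card_filter_form_lt_eq_card_filter_gt :
    ((box p q).filter (form p q · < p * q)).card =
      ((box p q).filter (p * q < form p q ·)).card := by
  refine card_nbij' (reflect p q) (reflect p q) ?_ ?_ (fun z _ ↦ reflect_reflect z)
    (fun z _ ↦ reflect_reflect z) <;>
  · intro z hz
    simp only [coe_filter, Set.mem_ofPred_eq] at hz ⊢
    exact ⟨reflect_mem_box hz.1, by rw [form_reflect]; linarith [hz.2]⟩

lemma two_mul_card_filter_form_lt (hpq : IsCoprime p q) :
    2 * ((box p q).filter (form p q · < p * q)).card = (box p q).card := by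
  have hsplit : (box p q).filter (fun z ↦ ¬form p q z < p * q) =
      (box p q).filter (p * q < form p q ·) :=
    filter_congr fun z hz ↦ by
      have := form_ne_mul_of_mem_box hpq hz
      omega
  rw [two_mul]
  nth_rewrite 2 [card_filter_form_lt_eq_card_filter_gt]
  rw [← hsplit, card_filter_add_card_filter_not]

lemma filter_exists_form_eq_image :
    (Icc (1 : ℤ) (p * q - 1)).filter
        (fun n ↦ ∃ x y : ℤ, 0 < x ∧ x < p ∧ 0 < y ∧ y < q ∧ n = q * x + p * y) =
      ((box p q).filter (form p q · < p * q)).image (form p q) := by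
  ext n
  simp only [mem_image, mem_filter, mem_Icc, Prod.exists, mem_box]
  simp only [form]
  constructor
  · rintro ⟨⟨-, hn⟩, x, y, hx₀, hxp, hy₀, hyq, rfl⟩
    exact ⟨x, y, ⟨⟨hx₀, hxp, hy₀, hyq⟩, by omega⟩, rfl⟩
  · rintro ⟨x, y, ⟨⟨hx₀, hxp, hy₀, hyq⟩, hlt⟩, rfl⟩
    exact ⟨⟨by nlinarith, by omega⟩, x, y, hx₀, hxp, hy₀, hyq, rfl⟩

end Sylvester

open Sylvester

/-- For coprime positive integers `p` and `q`, twice the number of integers `n` with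
`1 ≤ n ≤ pq − 1` of the form `n = qx + py` with `0 < x < p`, `0 < y < q` is
`(p−1)(q−1)`. -/
theorem card_S
    (p q : ℤ) (hp : 0 < p) (hq : 0 < q) (hpq : IsCoprime p q) :
    (2 : ℤ) * ((Finset.Icc (1 : ℤ) (p * q - 1)).filter
        (fun n => ∃ x y : ℤ, 0 < x ∧ x < p ∧ 0 < y ∧ y < q ∧ n = q * x + p * y)).card =
      (p - 1) * (q - 1) := by
  rw [filter_exists_form_eq_image,
    card_image_of_injOn ((form_injOn_box hpq).mono (coe_subset.mpr (filter_subset _ _))),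
    ← card_box hp hq, ← two_mul_card_filter_form_lt hpq]
  norm_cast
end

section
/- Let p and q be coprime positive integers. Then 12·∑_{n ∈ S} n = 4pq(p−1)(q−1) + (p−1)(q−1)(p+q+1); equivalently, ∑_{n ∈ S} n = (1/3)pq(p−1)(q−1) + (1/12)(p−1)(q−1)(p+q+1). -/
/-!
Coprimality makes `(x, y) ↦ qx + py` injective on the box `0 < x < p`, `0 < y < q`, so `∑ S` is
the sum of `qx + py` over the lattice points of the box below the line `qx + py = pq`. Reflecting
`y ↦ q - y` in the `qx`-part and `x ↦ p - x` in the `py`-part turns it into the sum of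
`min (qx) (py)` over the whole box. Writing `min a b` as the number of `r < pq` with
`pq - a ≤ r` and `pq - b ≤ r`, and summing over the box first, gives `∑_{r < pq} ⌊r/q⌋ ⌊r/p⌋`.
Finally `pq ⌊r/q⌋ ⌊r/p⌋ = (r - r % q) (r - r % p)`: the sum of `r (r % p)` is evaluated by
writing `r = pj + u`, and that of `(r % p) (r % q)` factors by the Chinese remainder theorem.
-/

open scoped Classical

open Finset

theorem two_mul_sum_Ico_zero {n : ℤ} (hn : 0 ≤ n) : 2 * ∑ i ∈ Ico 0 n, i = n * (n - 1) := by
  induction n, hn using Int.leInduction with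
  | base => simp
  | succ n hn ih =>
    rw [Ico_add_one_right_eq_Icc, ← Ico_insert_right hn, sum_insert (by simp)]
    linear_combination ih

theorem six_mul_sum_Ico_zero_sq {n : ℤ} (hn : 0 ≤ n) :
    6 * ∑ i ∈ Ico 0 n, i ^ 2 = n * (n - 1) * (2 * n - 1) := by
  induction n, hn using Int.leInduction with
  | base => simp
  | succ n hn ih =>
    rw [Ico_add_one_right_eq_Icc, ← Ico_insert_right hn, sum_insert (by simp)]
    linear_combination ih

theorem sum_Ioo_zero_sub {M : Type*} [AddCommMonoid M] (a : ℤ) (f : ℤ → M) :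
    ∑ x ∈ Ioo 0 a, f (a - x) = ∑ x ∈ Ioo 0 a, f x := by
  refine sum_nbij' (a - ·) (a - ·) ?_ ?_ ?_ ?_ fun _ _ => rfl <;> intro x hx <;>
    simp only [mem_Ioo, sub_sub_cancel] at hx ⊢ <;> omega

section Coprime

variable {p q : ℤ}

theorem IsCoprime.eq_of_mul_add_mul_eq (hpq : IsCoprime p q) {x x' y y' : ℤ}
    (hx : x ∈ Ico 0 p) (hx' : x' ∈ Ico 0 p) (h : q * x + p * y = q * x' + p * y') :
    x = x' ∧ y = y' := by
  rw [mem_Ico] at hx hx'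
  have hdvd : p ∣ x - x' := hpq.dvd_of_dvd_mul_left ⟨y' - y, by linear_combination h⟩
  have hxx' : x = x' := by
    linarith [Int.eq_zero_of_abs_lt_dvd hdvd (abs_sub_lt_iff.2 ⟨by linarith, by linarith⟩)]
  subst hxx'
  exact ⟨rfl, mul_left_cancel₀ (by omega : p ≠ 0) (by linarith)⟩

theorem IsCoprime.mul_ne_mul (hpq : IsCoprime p q) {x y : ℤ} (hx : x ∈ Ioo 0 p) :
    q * x ≠ p * y := by
  intro h
  rw [mem_Ioo] at hx
  have := (hpq.eq_of_mul_add_mul_eq (mem_Ico.2 ⟨hx.1.le, hx.2⟩) (mem_Ico.2 ⟨le_rfl, by linarith⟩)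
    (y := 0) (y' := y) (by linarith)).1
  linarith

theorem sum_filter_add_lt_eq_sum_min (hpq : IsCoprime p q) :
    ∑ z ∈ (Ioo 0 p ×ˢ Ioo 0 q).filter (fun z => q * z.1 + p * z.2 < p * q), (q * z.1 + p * z.2)
      = ∑ z ∈ Ioo 0 p ×ˢ Ioo 0 q, min (q * z.1) (p * z.2) := by
  have hx : ∀ x, ∑ y ∈ Ioo 0 q, (if q * x + p * y < p * q then q * x else 0)
      = ∑ y ∈ Ioo 0 q, if q * x < p * y then q * x else 0 := fun x => by
    rw [← sum_Ioo_zero_sub q]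
    refine sum_congr rfl fun y _ => ?_
    simp only [show q * x + p * (q - y) < p * q ↔ q * x < p * y by
      constructor <;> intro <;> linarith [mul_sub p q y, mul_comm p q]]
  have hy : ∑ x ∈ Ioo 0 p, ∑ y ∈ Ioo 0 q, (if q * x + p * y < p * q then p * y else 0)
      = ∑ x ∈ Ioo 0 p, ∑ y ∈ Ioo 0 q, if p * y < q * x then p * y else 0 := by
    rw [← sum_Ioo_zero_sub p]
    refine sum_congr rfl fun x _ => sum_congr rfl fun y _ => ?_
    simp only [show q * (p - x) + p * y < p * q ↔ p * y < q * x by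
      constructor <;> intro <;> linarith [mul_sub q p x, mul_comm p q]]
  have hmin : ∀ x ∈ Ioo 0 p, ∀ y,
      (if q * x < p * y then q * x else 0) + (if p * y < q * x then p * y else 0)
        = min (q * x) (p * y) := fun x hx y => by
    rcases (hpq.mul_ne_mul hx (y := y)).lt_or_gt with h | h <;> simp [h, h.not_gt, h.le]
  calc _ = ∑ x ∈ Ioo 0 p, ∑ y ∈ Ioo 0 q, ((if q * x + p * y < p * q then q * x else 0)
          + if q * x + p * y < p * q then p * y else 0) := by
        simp only [sum_filter, sum_product, ite_add_ite, add_zero]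
    _ = ∑ x ∈ Ioo 0 p, ∑ y ∈ Ioo 0 q, ((if q * x < p * y then q * x else 0)
          + if p * y < q * x then p * y else 0) := by
        simp only [sum_add_distrib, hx, hy]
    _ = _ := by
        rw [sum_product]
        exact sum_congr rfl fun x hx => sum_congr rfl fun y _ => hmin x hx y

theorem sum_filter_exists_eq_sum_filter_add_lt (hpq : IsCoprime p q) :
    ∑ n ∈ (Icc 1 (p * q - 1)).filter
        (fun n => ∃ x y : ℤ, 0 < x ∧ x < p ∧ 0 < y ∧ y < q ∧ n = q * x + p * y), n
      = ∑ z ∈ (Ioo 0 p ×ˢ Ioo 0 q).filter (fun z => q * z.1 + p * z.2 < p * q),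
          (q * z.1 + p * z.2) := by
  have himage : (Icc 1 (p * q - 1)).filter
        (fun n => ∃ x y : ℤ, 0 < x ∧ x < p ∧ 0 < y ∧ y < q ∧ n = q * x + p * y)
      = ((Ioo 0 p ×ˢ Ioo 0 q).filter (fun z => q * z.1 + p * z.2 < p * q)).image
          (fun z => q * z.1 + p * z.2) := by
    ext n
    simp only [mem_filter, mem_Icc, mem_image, mem_product, mem_Ioo, Prod.exists]
    constructor
    · rintro ⟨hn, x, y, hx0, hxp, hy0, hyq, rfl⟩
      exact ⟨x, y, ⟨⟨⟨hx0, hxp⟩, hy0, hyq⟩, by linarith⟩, rfl⟩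
    · rintro ⟨x, y, ⟨⟨⟨hx0, hxp⟩, hy0, hyq⟩, hlt⟩, rfl⟩
      exact ⟨⟨by nlinarith, by linarith⟩, x, y, hx0, hxp, hy0, hyq, rfl⟩
  rw [himage, sum_image]
  rintro ⟨x, y⟩ hz ⟨x', y'⟩ hz' h
  simp only [coe_filter, mem_product, mem_Ioo, Set.mem_ofPred_eq] at hz hz'
  exact Prod.ext_iff.2 (hpq.eq_of_mul_add_mul_eq (mem_Ico.2 ⟨hz.1.1.1.le, hz.1.1.2⟩)
    (mem_Ico.2 ⟨hz'.1.1.1.le, hz'.1.1.2⟩) h)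

end Coprime

section Counting

variable {p q : ℤ}

theorem min_eq_sum_Ico_zero_ite_mul_ite {a b N : ℤ} (ha : 0 ≤ a) (hb : 0 ≤ b) (haN : a ≤ N) :
    min a b = ∑ r ∈ Ico 0 N, (if N - a ≤ r then 1 else 0) * (if N - b ≤ r then 1 else 0) := by
  simp only [ite_zero_mul_ite_zero, mul_one, sum_boole]
  have hfilter : {r ∈ Ico 0 N | N - a ≤ r ∧ N - b ≤ r} = Ico (N - min a b) N := by
    ext r
    simp only [mem_filter, mem_Ico]
    omega
  rw [hfilter, Int.card_Ico, Int.toNat_of_nonneg (by omega)]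
  ring

theorem sum_Ioo_zero_ite_sub_mul_le {r : ℤ} (hq : 0 < q) (hr : 0 ≤ r) (hrpq : r < p * q) :
    ∑ x ∈ Ioo 0 p, (if p * q - q * x ≤ r then 1 else 0) = r / q := by
  have hrq : r / q < p := (Int.ediv_lt_iff_lt_mul hq).2 hrpq
  have hfilter : {x ∈ Ioo 0 p | p * q - q * x ≤ r} = Ico (p - r / q) p := by
    ext x
    have : p * q - q * x ≤ r ↔ p - x ≤ r / q := by
      rw [Int.le_ediv_iff_mul_le hq, sub_mul, mul_comm x]
    simp only [mem_filter, mem_Ioo, mem_Ico, this]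
    omega
  rw [sum_boole, hfilter, Int.card_Ico, sub_sub_cancel,
    Int.toNat_of_nonneg (Int.ediv_nonneg hr hq.le)]

theorem sum_min_mul_eq_sum_Ico_zero_ediv_mul_ediv (hp : 0 < p) (hq : 0 < q) :
    ∑ z ∈ Ioo 0 p ×ˢ Ioo 0 q, min (q * z.1) (p * z.2) = ∑ r ∈ Ico 0 (p * q), (r / q) * (r / p) :=
  calc ∑ z ∈ Ioo 0 p ×ˢ Ioo 0 q, min (q * z.1) (p * z.2)
      = ∑ z ∈ Ioo 0 p ×ˢ Ioo 0 q, ∑ r ∈ Ico 0 (p * q),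
          (if p * q - q * z.1 ≤ r then 1 else 0) * (if p * q - p * z.2 ≤ r then 1 else 0) := by
        refine sum_congr rfl fun z hz => ?_
        simp only [mem_product, mem_Ioo] at hz
        exact min_eq_sum_Ico_zero_ite_mul_ite (by nlinarith) (by nlinarith) (by nlinarith)
    _ = ∑ r ∈ Ico 0 (p * q), (∑ x ∈ Ioo 0 p, if p * q - q * x ≤ r then 1 else 0)
          * ∑ y ∈ Ioo 0 q, if q * p - p * y ≤ r then 1 else 0 := by
        simp only [sum_mul_sum, mul_comm q p]
        rw [sum_comm]
        simp only [sum_product]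
    _ = ∑ r ∈ Ico 0 (p * q), (r / q) * (r / p) := by
        refine sum_congr rfl fun r hr => ?_
        rw [mem_Ico] at hr
        rw [sum_Ioo_zero_ite_sub_mul_le hq hr.1 hr.2,
          sum_Ioo_zero_ite_sub_mul_le hp hr.1 (by linarith [mul_comm p q])]

end Counting

section Reindexing

variable {M : Type*} [AddCommMonoid M] {p q : ℤ}

theorem sum_Ico_zero_mul (hp : 0 < p) (f : ℤ → M) :
    ∑ r ∈ Ico 0 (p * q), f r = ∑ j ∈ Ico 0 q, ∑ u ∈ Ico 0 p, f (p * j + u) := by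
  rw [← sum_product']
  refine sum_nbij' (fun r => (r / p, r % p)) (fun z => p * z.1 + z.2) ?_ ?_ ?_ ?_ ?_
  · intro r hr
    simp only [mem_Ico, mem_product] at hr ⊢
    refine ⟨⟨Int.ediv_nonneg hr.1 hp.le, (Int.ediv_lt_iff_lt_mul hp).2 (by linarith)⟩,
      Int.emod_nonneg _ hp.ne', Int.emod_lt_of_pos _ hp⟩
  · rintro ⟨j, u⟩ hz
    simp only [mem_Ico, mem_product] at hz ⊢
    constructor <;> nlinarith
  · intro r _
    exact Int.mul_ediv_add_emod r p
  · rintro ⟨j, u⟩ hz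
    simp only [mem_Ico, mem_product] at hz
    rw [Prod.mk.injEq, add_comm, Int.add_mul_ediv_left _ _ hp.ne', Int.add_mul_emod_self_left,
      Int.ediv_eq_zero_of_lt hz.2.1 hz.2.2, Int.emod_eq_of_lt hz.2.1 hz.2.2, zero_add]
    exact ⟨rfl, rfl⟩
  · intro r _
    rw [Int.mul_ediv_add_emod]

theorem sum_Ico_zero_mul_emod_emod (hp : 0 < p) (hq : 0 < q) (hpq : IsCoprime p q)
    (f : ℤ → ℤ → M) :
    ∑ r ∈ Ico 0 (p * q), f (r % p) (r % q) = ∑ u ∈ Ico 0 p, ∑ v ∈ Ico 0 q, f u v := by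
  rw [← sum_product']
  have hmaps : ∀ r ∈ Ico 0 (p * q), (r % p, r % q) ∈ Ico 0 p ×ˢ Ico 0 q := fun r _ => by
    simp only [mem_Ico, mem_product]
    exact ⟨⟨Int.emod_nonneg _ hp.ne', Int.emod_lt_of_pos _ hp⟩,
      Int.emod_nonneg _ hq.ne', Int.emod_lt_of_pos _ hq⟩
  have hinj : Set.InjOn (fun r => (r % p, r % q)) (Ico 0 (p * q)) := by
    intro r hr r' hr' h
    simp only [coe_Ico, Set.mem_Ico, Prod.mk.injEq] at hr hr' h
    have hdvd : p * q ∣ r - r' :=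
      hpq.mul_dvd (Int.ModEq.dvd h.1.symm) (Int.ModEq.dvd h.2.symm)
    have := Int.eq_zero_of_abs_lt_dvd hdvd (abs_sub_lt_iff.2 ⟨by linarith, by linarith⟩)
    linarith
  refine sum_nbij _ hmaps hinj (surjOn_of_injOn_of_card_le _ hmaps hinj ?_) fun _ _ => rfl
  simp only [card_product, Int.card_Ico, sub_zero]
  rw [← Int.toNat_mul hp.le hq.le]

theorem twelve_mul_sum_Ico_zero_mul_mul_emod (hp : 0 < p) (hq : 0 ≤ q) :
    12 * ∑ r ∈ Ico 0 (p * q), r * (r % p)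
      = 3 * p ^ 2 * q * (p - 1) * (q - 1) + 2 * p * q * (p - 1) * (2 * p - 1) := by
  have hterm : ∀ j, ∀ u ∈ Ico 0 p, (p * j + u) * ((p * j + u) % p) = p * j * u + u ^ 2 := by
    intro j u hu
    rw [mem_Ico] at hu
    rw [add_comm (p * j), Int.add_mul_emod_self_left, Int.emod_eq_of_lt hu.1 hu.2]
    ring
  rw [sum_Ico_zero_mul hp, sum_congr rfl fun j _ => sum_congr rfl (hterm j)]
  simp only [sum_add_distrib, sum_const, Int.card_Ico, sub_zero, Int.toNat_of_nonneg hq,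
    nsmul_eq_mul]
  rw [← sum_mul_sum, ← mul_sum]
  linear_combination (6 * p * (∑ u ∈ Ico 0 p, u)) * two_mul_sum_Ico_zero hq
    + 3 * p * q * (q - 1) * two_mul_sum_Ico_zero hp.le + 2 * q * six_mul_sum_Ico_zero_sq hp.le

theorem four_mul_sum_Ico_zero_emod_mul_emod (hp : 0 < p) (hq : 0 < q) (hpq : IsCoprime p q) :
    4 * ∑ r ∈ Ico 0 (p * q), (r % p) * (r % q) = p * (p - 1) * q * (q - 1) := by
  rw [sum_Ico_zero_mul_emod_emod hp hq hpq (fun u v => u * v), ← sum_mul_sum]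
  linear_combination 2 * (∑ v ∈ Ico 0 q, v) * two_mul_sum_Ico_zero hp.le
    + p * (p - 1) * two_mul_sum_Ico_zero hq.le

theorem twelve_mul_sum_Ico_zero_ediv_mul_ediv (hp : 0 < p) (hq : 0 < q) (hpq : IsCoprime p q) :
    12 * ∑ r ∈ Ico 0 (p * q), (r / q) * (r / p)
      = 4 * p * q * (p - 1) * (q - 1) + (p - 1) * (q - 1) * (p + q + 1) := by
  have hexpand : ∀ r, p * q * ((r / q) * (r / p))
      = r ^ 2 - r * (r % p) - r * (r % q) + (r % p) * (r % q) := by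
    intro r
    rw [Int.emod_def r p, Int.emod_def r q]
    ring
  have hsum : p * q * ∑ r ∈ Ico 0 (p * q), (r / q) * (r / p)
      = ∑ r ∈ Ico 0 (p * q), r ^ 2 - ∑ r ∈ Ico 0 (p * q), r * (r % p)
        - ∑ r ∈ Ico 0 (q * p), r * (r % q) + ∑ r ∈ Ico 0 (p * q), (r % p) * (r % q) := by
    simp only [mul_sum, hexpand, sum_add_distrib, sum_sub_distrib, mul_comm q p]
  refine mul_left_cancel₀ (mul_pos hp hq).ne' ?_
  linear_combination 12 * hsum + 2 * six_mul_sum_Ico_zero_sq (mul_pos hp hq).le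
    - twelve_mul_sum_Ico_zero_mul_mul_emod hp hq.le
    - twelve_mul_sum_Ico_zero_mul_mul_emod hq hp.le
    + 3 * four_mul_sum_Ico_zero_emod_mul_emod hp hq hpq

end Reindexing

/-- Mordell's formula: for coprime positive integers `p` and `q`,
`∑_{n ∈ S} n = (1/3)pq(p−1)(q−1) + (1/12)(p−1)(q−1)(p+q+1)`, where `S` is the set of
`n` with `1 ≤ n ≤ pq − 1` of the form `n = qx + py`, `0 < x < p`, `0 < y < q`. -/
theorem sum_S
    (p q : ℤ) (hp : 0 < p) (hq : 0 < q) (hpq : IsCoprime p q) :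
    12 * ∑ n ∈ (Finset.Icc (1 : ℤ) (p * q - 1)).filter
        (fun n => ∃ x y : ℤ, 0 < x ∧ x < p ∧ 0 < y ∧ y < q ∧ n = q * x + p * y), n =
      4 * p * q * (p - 1) * (q - 1) + (p - 1) * (q - 1) * (p + q + 1) := by
  rw [sum_filter_exists_eq_sum_filter_add_lt hpq, sum_filter_add_lt_eq_sum_min hpq,
    sum_min_mul_eq_sum_Ico_zero_ediv_mul_ediv hp hq]
  exact twelve_mul_sum_Ico_zero_ediv_mul_ediv hp hq hpq
end

section
/- Let p and q be coprime positive integers. Then 6·∑_{n=1}^{pq−1} (pq − n)·j(n) = −(p−1)(p+1)(q−1)(q+1), the sum being over the integers n with 1 ≤ n ≤ pq−1. -/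
open scoped Classical

/-!
Let `S` be the set of numbers `qx + py` with `0 < x < p`, `0 < y < q`. For `0 < n < pq` prime
to `pq`, exactly one of `n` and `pq - n` lies in `S` (existence by the Chinese remainder theorem,
uniqueness by reducing modulo `p`). Hence `j(n) = [n ∈ S] - [pq - n ∈ S]`, and the weighted sum
becomes `∑_{n ∈ S, n < pq} (pq - 2n)`, a sum over the lattice points of the triangle
`qx + py < pq`. Summing the column `x = p - u` in closed form involves `⌊qu/p⌋` only through
`r = qu mod p`, and since `u ↦ qu mod p` permutes `{1, …, p - 1}`, the Dedekind-sum-like terms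
cancel and `p · ∑_{n ∈ S, n < pq} (pq - 2n) = (q² - 1) ∑_{u=1}^{p-1} (u² - pu)`.
-/

open Finset

section IntervalSums

lemma sum_Ioc_zero_add_one {M : Type*} [AddCommMonoid M] (f : ℤ → M) {m : ℤ} (hm : 0 ≤ m) :
    ∑ x ∈ Ioc 0 (m + 1), f x = ∑ x ∈ Ioc 0 m, f x + f (m + 1) := by
  have hIoc : Ioc 0 (m + 1) = insert (m + 1) (Ioc 0 m) := by
    ext x; simp only [mem_Ioc, mem_insert]; omega
  rw [hIoc, sum_insert (by simp), add_comm]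

lemma natCast_card_Ioc_zero {m : ℤ} (hm : 0 ≤ m) : (#(Ioc 0 m) : ℤ) = m := by
  rw [Int.card_Ioc, sub_zero, Int.toNat_of_nonneg hm]

lemma two_mul_sum_Ioc_zero_id {m : ℤ} (hm : 0 ≤ m) : 2 * ∑ x ∈ Ioc 0 m, x = m * (m + 1) := by
  induction m, hm using Int.leInduction with
  | base => simp
  | succ m hm ih => rw [sum_Ioc_zero_add_one _ hm, mul_add, ih]; ring

lemma six_mul_sum_Ioc_zero_sq {m : ℤ} (hm : 0 ≤ m) :
    6 * ∑ x ∈ Ioc 0 m, x ^ 2 = m * (m + 1) * (2 * m + 1) := by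
  induction m, hm using Int.leInduction with
  | base => simp
  | succ m hm ih => rw [sum_Ioc_zero_add_one _ hm, mul_add, ih]; ring

lemma sum_Ioc_zero_comp_sub {M : Type*} [AddCommMonoid M] (f : ℤ → M) (m : ℤ) :
    ∑ x ∈ Ioc 0 (m - 1), f (m - x) = ∑ x ∈ Ioc 0 (m - 1), f x :=
  sum_nbij' (m - ·) (m - ·) (by intro x; simp only [mem_Ioc]; omega)
    (by intro x; simp only [mem_Ioc]; omega) (fun _ _ => sub_sub_cancel m _)
    (fun _ _ => sub_sub_cancel m _) (fun _ _ => rfl)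

lemma filter_Ioc_zero_mul_lt {p a k m : ℤ} (hp : 0 ≤ p) (hka : p * k < a)
    (hak : a ≤ p * (k + 1)) (hkm : k ≤ m) : {y ∈ Ioc 0 m | p * y < a} = Ioc 0 k := by
  ext y
  simp only [mem_filter, mem_Ioc]
  constructor
  · rintro ⟨⟨hy0, -⟩, hya⟩
    by_contra hyk
    have : p * (k + 1) ≤ p * y := mul_le_mul_of_nonneg_left (by omega) hp
    omega
  · rintro ⟨hy0, hyk⟩
    have : p * y ≤ p * k := mul_le_mul_of_nonneg_left hyk hp
    exact ⟨⟨hy0, hyk.trans hkm⟩, by omega⟩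

end IntervalSums

section Coprime

variable {p q : ℤ}

lemma IsCoprime.not_dvd_mul_add (hpq : IsCoprime p q) {x : ℤ} (hx0 : 0 < x) (hxp : x < p)
    (y : ℤ) : ¬ p ∣ q * x + p * y := by
  intro h
  have := Int.le_of_dvd hx0 (hpq.dvd_of_dvd_mul_left ((dvd_add_left (dvd_mul_right p y)).1 h))
  omega

lemma IsCoprime.mapsTo_emod_mul (hpq : IsCoprime p q) :
    Set.MapsTo (fun u => q * u % p) (Ioc 0 (p - 1) : Set ℤ) (Ioc 0 (p - 1)) := by
  intro u hu
  simp only [coe_Ioc, Set.mem_Ioc] at hu ⊢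
  have hp : 0 < p := by omega
  have hne : q * u % p ≠ 0 := fun h =>
    hpq.not_dvd_mul_add hu.1 (by omega) 0 (by simpa using Int.dvd_of_emod_eq_zero h)
  have := Int.emod_nonneg (q * u) hp.ne'
  have := Int.emod_lt_of_pos (q * u) hp
  omega

lemma IsCoprime.injOn_emod_mul (hpq : IsCoprime p q) :
    Set.InjOn (fun u => q * u % p) (Ioc 0 (p - 1) : Set ℤ) := by
  intro u hu v hv huv
  simp only [coe_Ioc, Set.mem_Ioc] at hu hv
  have hdvd : p ∣ q * (u - v) := by
    rw [mul_sub]; exact Int.ModEq.dvd huv.symm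
  have := Int.eq_zero_of_abs_lt_dvd (hpq.dvd_of_dvd_mul_left hdvd) (by rw [abs_lt]; omega)
  omega

lemma IsCoprime.sum_Ioc_comp_emod_mul {M : Type*} [AddCommMonoid M] (hpq : IsCoprime p q)
    (f : ℤ → M) : ∑ u ∈ Ioc 0 (p - 1), f (q * u % p) = ∑ u ∈ Ioc 0 (p - 1), f u := by
  have himage : (Ioc 0 (p - 1)).image (fun u => q * u % p) = Ioc 0 (p - 1) :=
    eq_of_subset_of_card_le (image_subset_iff.2 fun u hu => by simpa using hpq.mapsTo_emod_mul hu)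
      (card_image_of_injOn hpq.injOn_emod_mul).ge
  rw [← sum_image hpq.injOn_emod_mul, himage]

end Coprime

def IsPosComb (p q n : ℤ) : Prop :=
  ∃ x y : ℤ, 0 < x ∧ x < p ∧ 0 < y ∧ y < q ∧ n = q * x + p * y

section TorusJump

variable {p q n : ℤ}

lemma torusJump_eq_ite :
    torusJump p q n = if p ∣ n ∨ q ∣ n then 0 else if IsPosComb p q n then 1 else -1 :=
  rfl

lemma isPosComb_comm : IsPosComb p q n ↔ IsPosComb q p n := by
  constructor <;> rintro ⟨x, y, hx0, hx, hy0, hy, rfl⟩ <;>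
    exact ⟨y, x, hy0, hy, hx0, hx, add_comm _ _⟩

lemma IsPosComb.not_dvd_left (hpq : IsCoprime p q) (h : IsPosComb p q n) : ¬ p ∣ n := by
  obtain ⟨x, y, hx0, hxp, -, -, rfl⟩ := h
  exact hpq.not_dvd_mul_add hx0 hxp y

lemma IsPosComb.not_dvd_right (hpq : IsCoprime p q) (h : IsPosComb p q n) : ¬ q ∣ n :=
  (isPosComb_comm.1 h).not_dvd_left hpq.symm

lemma IsPosComb.not_isPosComb_mul_sub (hpq : IsCoprime p q) (h : IsPosComb p q n) :
    ¬ IsPosComb p q (p * q - n) := by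
  obtain ⟨x, y, hx0, hxp, hy0, -, rfl⟩ := h
  rintro ⟨x', y', hx0', hxp', hy0', -, h'⟩
  have hp : 0 < p := by omega
  obtain ⟨c, hc⟩ : p ∣ x + x' :=
    hpq.dvd_of_dvd_mul_left ⟨q - y - y', by linear_combination -h'⟩
  have hc0 : 0 < c := pos_of_mul_pos_right (by omega) hp.le
  have hc2 : c < 2 := lt_of_mul_lt_mul_left (by omega) hp.le
  obtain rfl : c = 1 := by omega
  have hqx : q * (x + x') = q * p := by rw [hc, mul_one]
  have := mul_pos hp (show 0 < y + y' by omega)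
  linarith

lemma isPosComb_or_isPosComb_mul_sub (hp : 0 < p) (hq : 0 < q) (hpq : IsCoprime p q)
    (hn0 : 0 < n) (hnpq : n < p * q) (hpn : ¬ p ∣ n) (hqn : ¬ q ∣ n) :
    IsPosComb p q n ∨ IsPosComb p q (p * q - n) := by
  obtain ⟨a, b, hab⟩ := id hpq
  set x := b * n % p
  set y := a * n % q
  have hx : p ∣ q * x - n :=
    ⟨-(a * n) - q * (b * n / p), by simp only [x, Int.emod_def]; linear_combination n * hab⟩
  have hy : q ∣ p * y - n :=
    ⟨-(b * n) - p * (a * n / q), by simp only [y, Int.emod_def]; linear_combination n * hab⟩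
  have hx0 : x ≠ 0 := fun h0 => hpn (by simpa [h0] using hx)
  have hy0 : y ≠ 0 := fun h0 => hqn (by simpa [h0] using hy)
  have := Int.emod_nonneg (b * n) hp.ne'
  have := Int.emod_lt_of_pos (b * n) hp
  have := Int.emod_nonneg (a * n) hq.ne'
  have := Int.emod_lt_of_pos (a * n) hq
  -- `q x + p y ≡ n` modulo `p` and modulo `q`, hence modulo `p q`
  obtain ⟨t, ht⟩ : p * q ∣ q * x + p * y - n := hpq.mul_dvd
    (by simpa [add_sub_right_comm] using dvd_add hx (dvd_mul_right p y))
    (by simpa [add_sub_assoc] using dvd_add (dvd_mul_right q x) hy)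
  have hxq : q * x ≤ q * (p - 1) := mul_le_mul_of_nonneg_left (by omega) hq.le
  have hyp : p * y ≤ p * (q - 1) := mul_le_mul_of_nonneg_left (by omega) hp.le
  have hs0 : 0 < q * x + p * y := by
    have := mul_pos hq (show 0 < x by omega); have := mul_pos hp (show 0 < y by omega); omega
  have ht0 : 0 ≤ t := by nlinarith
  have ht1 : t ≤ 1 := by nlinarith
  obtain rfl | rfl : t = 0 ∨ t = 1 := by omega
  · exact .inl ⟨x, y, by omega, by omega, by omega, by omega, by linarith⟩
  · exact .inr ⟨p - x, q - y, by omega, by omega, by omega, by omega, by linear_combination ht⟩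

lemma torusJump_eq_ite_sub_ite (hp : 0 < p) (hq : 0 < q) (hpq : IsCoprime p q) (hn0 : 0 < n)
    (hnpq : n < p * q) :
    torusJump p q n =
      (if IsPosComb p q n then 1 else 0) - if IsPosComb p q (p * q - n) then 1 else 0 := by
  rw [torusJump_eq_ite]
  by_cases hd : p ∣ n ∨ q ∣ n
  · have h : ¬ IsPosComb p q n := fun h => hd.elim (h.not_dvd_left hpq) (h.not_dvd_right hpq)
    have h' : ¬ IsPosComb p q (p * q - n) := fun h' => hd.elim
      (fun hpn => h'.not_dvd_left hpq (dvd_sub (dvd_mul_right p q) hpn))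
      (fun hqn => h'.not_dvd_right hpq (dvd_sub (dvd_mul_left q p) hqn))
    simp [hd, h, h']
  · push Not at hd
    rcases isPosComb_or_isPosComb_mul_sub hp hq hpq hn0 hnpq hd.1 hd.2 with h | h'
    · simp [hd, h, h.not_isPosComb_mul_sub hpq]
    · have h : ¬ IsPosComb p q n := fun h => h.not_isPosComb_mul_sub hpq h'
      simp [hd, h, h']

lemma IsCoprime.injOn_comb (hpq : IsCoprime p q) :
    Set.InjOn (fun z : ℤ × ℤ => q * z.1 + p * z.2)
      (Ioc 0 (p - 1) ×ˢ Ioc 0 (q - 1) : Finset (ℤ × ℤ)) := by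
  rintro ⟨x, y⟩ hz ⟨x', y'⟩ hz' h
  simp only [coe_product, coe_Ioc, Set.mem_prod, Set.mem_Ioc] at hz hz' h
  have hdvd : p ∣ x - x' := hpq.dvd_of_dvd_mul_left ⟨y' - y, by linear_combination h⟩
  obtain rfl : x = x' := by
    have := Int.eq_zero_of_abs_lt_dvd hdvd (by rw [abs_lt]; omega)
    omega
  obtain rfl : y = y' := mul_left_cancel₀ (show p ≠ 0 by omega) (by linarith)
  rfl

lemma filter_isPosComb :
    {n ∈ Ioc 0 (p * q - 1) | IsPosComb p q n} =
      {z ∈ Ioc 0 (p - 1) ×ˢ Ioc 0 (q - 1) | q * z.1 + p * z.2 < p * q}.image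
        (fun z => q * z.1 + p * z.2) := by
  ext n
  simp only [mem_filter, mem_image, mem_product, mem_Ioc, Prod.exists]
  unfold IsPosComb
  constructor
  · rintro ⟨⟨-, hn⟩, x, y, hx0, hxp, hy0, hyq, rfl⟩
    exact ⟨x, y, ⟨⟨⟨hx0, by omega⟩, hy0, by omega⟩, by omega⟩, rfl⟩
  · rintro ⟨x, y, ⟨⟨⟨hx0, hxp⟩, hy0, hyq⟩, hs⟩, rfl⟩
    have := mul_pos (show 0 < q by omega) hx0
    have := mul_pos (show 0 < p by omega) hy0
    exact ⟨⟨by omega, by omega⟩, x, y, hx0, by omega, hy0, by omega, rfl⟩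

lemma IsCoprime.sum_ite_isPosComb {M : Type*} [AddCommMonoid M] (hpq : IsCoprime p q)
    (f : ℤ → M) :
    ∑ n ∈ Ioc 0 (p * q - 1), (if IsPosComb p q n then f n else 0) =
      ∑ x ∈ Ioc 0 (p - 1), ∑ y ∈ Ioc 0 (q - 1),
        if q * x + p * y < p * q then f (q * x + p * y) else 0 := by
  rw [← sum_filter, filter_isPosComb,
    sum_image (hpq.injOn_comb.mono (coe_subset.2 (filter_subset _ _))), sum_filter, sum_product]

end TorusJump

section Triangle

variable {p q : ℤ}

lemma sum_mul_torusJump (hp : 0 < p) (hq : 0 < q) (hpq : IsCoprime p q) :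
    ∑ n ∈ Ioc 0 (p * q - 1), (p * q - n) * torusJump p q n =
      ∑ x ∈ Ioc 0 (p - 1), ∑ y ∈ Ioc 0 (q - 1),
        if q * x + p * y < p * q then p * q - 2 * (q * x + p * y) else 0 := by
  calc ∑ n ∈ Ioc 0 (p * q - 1), (p * q - n) * torusJump p q n
      = ∑ n ∈ Ioc 0 (p * q - 1), ((if IsPosComb p q n then p * q - n else 0) -
          if IsPosComb p q (p * q - n) then p * q - n else 0) := by
        refine sum_congr rfl fun n hn => ?_
        rw [mem_Ioc] at hn
        rw [torusJump_eq_ite_sub_ite hp hq hpq hn.1 (by omega)]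
        split_ifs <;> ring
    _ = ∑ n ∈ Ioc 0 (p * q - 1), ((if IsPosComb p q n then p * q - n else 0) -
          if IsPosComb p q n then n else 0) := by
        rw [sum_sub_distrib, sum_sub_distrib,
          sum_Ioc_zero_comp_sub (fun n => if IsPosComb p q n then n else 0)]
    _ = ∑ n ∈ Ioc 0 (p * q - 1), if IsPosComb p q n then p * q - 2 * n else 0 :=
        sum_congr rfl fun n _ => by split_ifs <;> ring
    _ = _ := hpq.sum_ite_isPosComb _

lemma IsCoprime.mul_sum_ite_mul_lt (hq : 0 < q) (hpq : IsCoprime p q) {u : ℤ} (hu0 : 0 < u)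
    (hup : u < p) :
    p * ∑ y ∈ Ioc 0 (q - 1), (if p * y < q * u then 2 * q * u - p * q - 2 * p * y else 0) =
      (q * u - q * u % p) * (q * u + q * u % p - p * (q + 1)) := by
  have hp : 0 < p := by omega
  set k := q * u / p
  set r := q * u % p
  have hdiv : p * k + r = q * u := Int.mul_ediv_add_emod (q * u) p
  have hr : 0 < r ∧ r ≤ p - 1 := by
    simpa using hpq.mapsTo_emod_mul (show u ∈ (Ioc 0 (p - 1) : Set ℤ) by
      simp only [coe_Ioc, Set.mem_Ioc]; omega)
  have hqu : q * u < q * p := mul_lt_mul_of_pos_left hup hq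
  have hk0 : 0 ≤ k := Int.ediv_nonneg (mul_pos hq hu0).le hp.le
  have hkq : k ≤ q - 1 := by
    have : k < q := lt_of_mul_lt_mul_left (show p * k < p * q by linarith) hp.le
    omega
  rw [← sum_filter, filter_Ioc_zero_mul_lt hp.le (by omega) (by linarith) hkq, sum_sub_distrib,
    sum_const, nsmul_eq_mul, natCast_card_Ioc_zero hk0, ← mul_sum]
  linear_combination
    (-p ^ 2) * two_mul_sum_Ioc_zero_id hk0 + (q * u + r - p * q - p - p * k) * hdiv

lemma IsCoprime.mul_sum_triangle (hq : 0 < q) (hpq : IsCoprime p q) :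
    p * ∑ x ∈ Ioc 0 (p - 1), ∑ y ∈ Ioc 0 (q - 1),
        (if q * x + p * y < p * q then p * q - 2 * (q * x + p * y) else 0) =
      (q ^ 2 - 1) * ∑ u ∈ Ioc 0 (p - 1), (u ^ 2 - p * u) := by
  calc _ = ∑ u ∈ Ioc 0 (p - 1), p * ∑ y ∈ Ioc 0 (q - 1),
        (if p * y < q * u then 2 * q * u - p * q - 2 * p * y else 0) := by
        rw [← sum_Ioc_zero_comp_sub _ p, mul_sum]
        refine sum_congr rfl fun u _ => congrArg (p * ·) (sum_congr rfl fun y _ => ?_)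
        have hlt : q * (p - u) + p * y < p * q ↔ p * y < q * u := by
          constructor <;> intro h <;> linarith
        simp only [hlt]
        split_ifs <;> ring
    _ = ∑ u ∈ Ioc 0 (p - 1), (((q * u) ^ 2 - p * (q + 1) * (q * u)) -
          ((q * u % p) ^ 2 - p * (q + 1) * (q * u % p))) := by
        refine sum_congr rfl fun u hu => ?_
        rw [mem_Ioc] at hu
        rw [hpq.mul_sum_ite_mul_lt hq hu.1 (by omega)]
        ring
    _ = ∑ u ∈ Ioc 0 (p - 1), ((q * u) ^ 2 - p * (q + 1) * (q * u)) -
          ∑ u ∈ Ioc 0 (p - 1), (u ^ 2 - p * (q + 1) * u) := by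
        rw [sum_sub_distrib, hpq.sum_Ioc_comp_emod_mul (fun r => r ^ 2 - p * (q + 1) * r)]
    _ = _ := by
        rw [← sum_sub_distrib, mul_sum]
        exact sum_congr rfl fun u _ => by ring

lemma six_mul_sum_Ioc_zero_sq_sub_mul (hp : 0 < p) :
    6 * ∑ u ∈ Ioc 0 (p - 1), (u ^ 2 - p * u) = -((p - 1) * p * (p + 1)) := by
  rw [sum_sub_distrib, ← mul_sum]
  linear_combination six_mul_sum_Ioc_zero_sq (show 0 ≤ p - 1 by omega) -
    3 * p * two_mul_sum_Ioc_zero_id (show 0 ≤ p - 1 by omega)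

end Triangle

/-- For coprime positive integers `p` and `q`,
`6 ∑_{n=1}^{pq−1} (pq − n) j(n) = −(p−1)(p+1)(q−1)(q+1)`. -/
theorem weighted_jump_sum
    (p q : ℤ) (hp : 0 < p) (hq : 0 < q) (hpq : IsCoprime p q) :
    6 * ∑ n ∈ Finset.Icc (1 : ℤ) (p * q - 1), (p * q - n) * torusJump p q n =
      -((p - 1) * (p + 1) * (q - 1) * (q + 1)) := by
  have hIcc : Icc (1 : ℤ) (p * q - 1) = Ioc 0 (p * q - 1) := by
    ext n; simp only [mem_Icc, mem_Ioc]; omega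
  rw [hIcc, sum_mul_torusJump hp hq hpq]
  refine mul_left_cancel₀ hp.ne' ?_
  linear_combination
    6 * hpq.mul_sum_triangle hq + (q ^ 2 - 1) * six_mul_sum_Ioc_zero_sq_sub_mul hp
end

section
/- Let p and q be coprime positive integers. Then, as rational numbers, (1/(pq))·∑_{n=1}^{pq−1} (2·∑_{i=1}^{n} j(i)) = −(p−1)(p+1)(q−1)(q+1)/(3pq). (The left-hand side is the integral over the unit circle of the ω-signatures of the (p,q) torus knot, i.e. its L² signature ∫_{S¹} σ_ω, since the ω-signature at ω = e^{2πix} with x ∈ (n/pq, (n+1)/pq) equals 2·∑_{i=1}^{n} j(i).) -/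
open scoped Classical

/-!
Write `j` for `torusJump p q`. Exchanging the two sums turns the left side into
`∑ₙ (pq - n) j(n)`. By the Chinese remainder theorem the `0 < n < pq` prime to `pq` correspond
to the lattice points `0 < x < p`, `0 < y < q` through `n ≡ qx + py (mod pq)`, and `j(n) = 1` or
`-1` according as `qx + py` equals `n` or `n + pq`. For fixed `x` the sum over `y` consists of two
arithmetic progressions, split at `y = q - 1 - ⌊qx/p⌋`; it equals a quadratic in `qx` plus a
quadratic in `qx mod p`. Since `x ↦ qx mod p` permutes `1, …, p - 1`, the latter may be replaced
by the same quadratic in `x`, and the sum over `x` is then evaluated by Faulhaber's formulas.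
-/

open Finset

theorem sum_Icc_sum_Icc_eq_sum_zsmul {M : Type*} [AddCommGroup M] (N : ℤ) (f : ℤ → M) :
    ∑ n ∈ Icc 1 N, ∑ i ∈ Icc 1 n, f i = ∑ i ∈ Icc 1 N, (N + 1 - i) • f i := by
  rw [sum_comm' (t' := Icc 1 N) (s' := fun i => Icc i N)
    (by intro n i; simp only [mem_Icc]; omega)]
  refine sum_congr rfl fun i hi => ?_
  rw [sum_const, Int.card_Icc, ← natCast_zsmul, Int.toNat_of_nonneg (by simp at hi; omega)]

theorem six_mul_sum_Ioc_quadratic (α β γ : ℤ) {a b : ℤ} (hab : a ≤ b) :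
    6 * ∑ y ∈ Ioc a b, (α + β * y + γ * y ^ 2) =
      (6 * α * b + 3 * β * b * (b + 1) + γ * b * (b + 1) * (2 * b + 1)) -
        (6 * α * a + 3 * β * a * (a + 1) + γ * a * (a + 1) * (2 * a + 1)) := by
  induction b, hab using Int.leInduction with
  | base => simp
  | succ b hab ih =>
    rw [← insert_Ioc_right_eq_Ioc_add_one_of_not_isMax hab (not_isMax b),
      sum_insert (by simp), mul_add, ih]
    ring

theorem Int.emod_eq_of_eq_add_mul {u r p t : ℤ} (h : u = r + p * t) (hr : 0 ≤ r) (hrp : r < p) :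
    u % p = r := by
  rw [h, Int.add_mul_emod_self_left, Int.emod_eq_of_lt hr hrp]

theorem two_mul_mul_sum_Ioc_ite {p q c : ℤ} (hp : 0 < p) (hc : 0 ≤ c) (hcq : c < p * q) :
    2 * p * ∑ y ∈ Ioc 0 (q - 1),
        (if c + p * y < p * q then p * q - (c + p * y) else c + p * y - 2 * (p * q)) =
      p ^ 2 * q * (q - 1) - 4 * p * q * c + 2 * c ^ 2 + 2 * (c % p) * (p * (q + 1) - c % p) := by
  obtain ⟨d, r, hd, hdq, hr, hrp, rfl⟩ : ∃ d r, 0 ≤ d ∧ d < q ∧ 0 ≤ r ∧ r < p ∧ c = r + p * d :=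
    ⟨c / p, c % p, Int.ediv_nonneg hc hp.le, Int.ediv_lt_of_lt_mul hp (by linarith),
      Int.emod_nonneg c hp.ne', Int.emod_lt_of_pos c hp, (Int.emod_add_mul_ediv c p).symm⟩
  rw [Int.add_mul_emod_self_left, Int.emod_eq_of_lt hr hrp,
    ← Ioc_union_Ioc_eq_Ioc (b := q - 1 - d) (by omega) (by omega),
    sum_union (Ioc_disjoint_Ioc_of_le le_rfl)]
  have below : ∑ y ∈ Ioc 0 (q - 1 - d),
      (if r + p * d + p * y < p * q then p * q - (r + p * d + p * y)
        else r + p * d + p * y - 2 * (p * q)) =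
      ∑ y ∈ Ioc 0 (q - 1 - d), ((p * q - p * d - r) + (-p) * y + 0 * y ^ 2) := by
    refine sum_congr rfl fun y hy => ?_
    rw [mem_Ioc] at hy
    rw [if_pos (by nlinarith)]
    ring
  have above : ∑ y ∈ Ioc (q - 1 - d) (q - 1),
      (if r + p * d + p * y < p * q then p * q - (r + p * d + p * y)
        else r + p * d + p * y - 2 * (p * q)) =
      ∑ y ∈ Ioc (q - 1 - d) (q - 1), ((p * d + r - 2 * (p * q)) + p * y + 0 * y ^ 2) := by
    refine sum_congr rfl fun y hy => ?_
    rw [mem_Ioc] at hy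
    rw [if_neg (by nlinarith)]
    ring
  have e₁ := six_mul_sum_Ioc_quadratic (p * q - p * d - r) (-p) 0 (a := 0) (b := q - 1 - d)
    (by omega)
  have e₂ := six_mul_sum_Ioc_quadratic (p * d + r - 2 * (p * q)) p 0 (a := q - 1 - d) (b := q - 1)
    (by omega)
  rw [below, above]
  refine mul_left_cancel₀ (three_ne_zero (α := ℤ)) ?_
  linear_combination p * e₁ + p * e₂

section Coprime

variable {p q : ℤ}

theorem not_dvd_mul_add_mul (hpq : IsCoprime p q) {x : ℤ} (hx : 0 < x) (hxp : x < p) (y : ℤ) :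
    ¬ p ∣ q * x + p * y := fun h =>
  have hpx : p ∣ x := hpq.dvd_of_dvd_mul_left ((dvd_add_left (dvd_mul_right p y)).mp h)
  (Int.le_of_dvd hx hpx).not_gt hxp

theorem sum_Ioc_mul_emod {M : Type*} [AddCommMonoid M] (hp : 0 < p) (hpq : IsCoprime p q)
    (f : ℤ → M) : ∑ x ∈ Ioc 0 (p - 1), f (q * x % p) = ∑ x ∈ Ioc 0 (p - 1), f x := by
  obtain ⟨a, b, hab⟩ := id hpq
  have hpb : IsCoprime p b := ⟨a, q, by linear_combination hab⟩
  have mem : ∀ {c x : ℤ}, IsCoprime p c → x ∈ Ioc 0 (p - 1) → c * x % p ∈ Ioc 0 (p - 1) := by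
    intro c x hc hx
    rw [mem_Ioc] at hx ⊢
    have h0 : c * x % p ≠ 0 := fun h0 =>
      not_dvd_mul_add_mul hc hx.1 (by omega) 0 (by simpa using Int.dvd_of_emod_eq_zero h0)
    have := Int.emod_nonneg (c * x) hp.ne'
    have := Int.emod_lt_of_pos (c * x) hp
    omega
  refine sum_nbij' (fun x => q * x % p) (fun x => b * x % p) (fun x hx => mem hpq hx)
    (fun x hx => mem hpb hx) (fun x hx => ?_) (fun x hx => ?_) (fun _ _ => rfl) <;>
    rw [mem_Ioc] at hx
  · refine Int.emod_eq_of_eq_add_mul (t := -a * x - b * (q * x / p)) ?_ hx.1.le (by omega)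
    linear_combination b * Int.emod_def (q * x) p + x * hab
  · refine Int.emod_eq_of_eq_add_mul (t := -a * x - q * (b * x / p)) ?_ hx.1.le (by omega)
    linear_combination q * Int.emod_def (b * x) p + x * hab

theorem torusJump_mul_add_mul (hpq : IsCoprime p q) {x y : ℤ} (hx : 0 < x) (hxp : x < p)
    (hy : 0 < y) (hyq : y < q) : torusJump p q (q * x + p * y) = 1 := by
  have hq : ¬ q ∣ q * x + p * y := by
    rw [add_comm]; exact not_dvd_mul_add_mul hpq.symm hy hyq x
  rw [torusJump, if_neg (not_or.mpr ⟨not_dvd_mul_add_mul hpq hx hxp y, hq⟩),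
    if_pos ⟨x, y, hx, hxp, hy, hyq, rfl⟩]

theorem torusJump_mul_add_mul_sub_mul (hpq : IsCoprime p q) {x y : ℤ} (hx : 0 < x) (hxp : x < p)
    (hy : 0 < y) (hyq : y < q) : torusJump p q (q * x + p * y - p * q) = -1 := by
  have hp : ¬ p ∣ q * x + p * y - p * q := by
    rw [show q * x + p * y - p * q = q * x + p * (y - q) by ring]
    exact not_dvd_mul_add_mul hpq hx hxp _
  have hq : ¬ q ∣ q * x + p * y - p * q := by
    rw [show q * x + p * y - p * q = p * y + q * (x - p) by ring]
    exact not_dvd_mul_add_mul hpq.symm hy hyq _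
  rw [torusJump, if_neg (not_or.mpr ⟨hp, hq⟩), if_neg]
  rintro ⟨x', y', hx', hx'p, hy', -, h⟩
  have hdvd : p ∣ x - x' := hpq.dvd_of_dvd_mul_left ⟨y' - y + q, by linear_combination h⟩
  have hxx' : x - x' = 0 := Int.eq_zero_of_abs_lt_dvd hdvd (abs_sub_lt_iff.mpr ⟨by omega, by omega⟩)
  have hyy' : p * (y - q - y') = 0 := by linear_combination h - q * hxx'
  rcases mul_eq_zero.mp hyy' with h0 | h0 <;> omega

theorem sub_emod_mul_torusJump_emod (hpq : IsCoprime p q) {x y : ℤ} (hx : 0 < x) (hxp : x < p)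
    (hy : 0 < y) (hyq : y < q) :
    (p * q - (q * x + p * y) % (p * q)) * torusJump p q ((q * x + p * y) % (p * q)) =
      if q * x + p * y < p * q then p * q - (q * x + p * y) else q * x + p * y - 2 * (p * q) := by
  have hpos : 0 < q * x + p * y := by nlinarith
  have hlt : q * x + p * y < 2 * (p * q) := by nlinarith
  split_ifs with h
  · rw [Int.emod_eq_of_lt hpos.le h, torusJump_mul_add_mul hpq hx hxp hy hyq, mul_one]
  · rw [Int.emod_eq_of_eq_add_mul (r := q * x + p * y - p * q) (t := 1) (by ring) (by omega)
      (by omega), torusJump_mul_add_mul_sub_mul hpq hx hxp hy hyq]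
    ring

theorem mul_add_mul_emod_mem_filter (hpq : IsCoprime p q) {x y : ℤ} (hx : 0 < x) (hxp : x < p)
    (hy : 0 < y) (hyq : y < q) :
    (q * x + p * y) % (p * q) ∈ (Ioc 0 (p * q - 1)).filter (fun n => ¬ p ∣ n ∧ ¬ q ∣ n) := by
  have hpq0 : 0 < p * q := mul_pos (by omega) (by omega)
  have hpn : ¬ p ∣ (q * x + p * y) % (p * q) := by
    rw [EuclideanDomain.dvd_mod_iff (dvd_mul_right p q)]
    exact not_dvd_mul_add_mul hpq hx hxp y
  have hqn : ¬ q ∣ (q * x + p * y) % (p * q) := by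
    rw [EuclideanDomain.dvd_mod_iff (dvd_mul_left q p), add_comm]
    exact not_dvd_mul_add_mul hpq.symm hy hyq x
  have := Int.emod_nonneg (q * x + p * y) hpq0.ne'
  have := Int.emod_lt_of_pos (q * x + p * y) hpq0
  have : (q * x + p * y) % (p * q) ≠ 0 := fun h => hpn (h ▸ dvd_zero p)
  simp only [mem_filter, mem_Ioc]
  exact ⟨⟨by omega, by omega⟩, hpn, hqn⟩

theorem sum_filter_not_dvd_eq_sum_product {M : Type*} [AddCommMonoid M] (hp : 0 < p) (hq : 0 < q)
    (hpq : IsCoprime p q) (f : ℤ → M) :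
    ∑ n ∈ (Ioc 0 (p * q - 1)).filter (fun n => ¬ p ∣ n ∧ ¬ q ∣ n), f n =
      ∑ z ∈ Ioc 0 (p - 1) ×ˢ Ioc 0 (q - 1), f ((q * z.1 + p * z.2) % (p * q)) := by
  obtain ⟨a, b, hab⟩ := id hpq
  refine (sum_nbij' (fun z => (q * z.1 + p * z.2) % (p * q)) (fun n => (b * n % p, a * n % q))
    ?_ ?_ ?_ ?_ (fun _ _ => rfl)).symm
  · rintro ⟨x, y⟩ hz
    simp only [mem_product, mem_Ioc] at hz
    exact mul_add_mul_emod_mem_filter hpq (by omega) (by omega) (by omega) (by omega)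
  · intro n hn
    simp only [mem_filter, mem_Ioc] at hn
    obtain ⟨-, hpn, hqn⟩ := hn
    have hpb : IsCoprime p b := ⟨a, q, by linear_combination hab⟩
    have hqa : IsCoprime q a := ⟨b, p, by linear_combination hab⟩
    have := Int.emod_nonneg (b * n) hp.ne'
    have := Int.emod_lt_of_pos (b * n) hp
    have := Int.emod_nonneg (a * n) hq.ne'
    have := Int.emod_lt_of_pos (a * n) hq
    have : b * n % p ≠ 0 := fun h => hpn (hpb.dvd_of_dvd_mul_left (Int.dvd_of_emod_eq_zero h))
    have : a * n % q ≠ 0 := fun h => hqn (hqa.dvd_of_dvd_mul_left (Int.dvd_of_emod_eq_zero h))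
    simp only [mem_product, mem_Ioc]
    omega
  · rintro ⟨x, y⟩ hz
    simp only [mem_product, mem_Ioc] at hz
    have hm := Int.emod_def (q * x + p * y) (p * q)
    refine Prod.ext (Int.emod_eq_of_eq_add_mul
      (t := b * y - a * x - b * q * ((q * x + p * y) / (p * q))) ?_ (by omega) (by omega))
      (Int.emod_eq_of_eq_add_mul
      (t := a * x - b * y - a * p * ((q * x + p * y) / (p * q))) ?_ (by omega) (by omega))
    · linear_combination b * hm + x * hab
    · linear_combination a * hm + y * hab
  · intro n hn
    simp only [mem_filter, mem_Ioc] at hn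
    refine Int.emod_eq_of_eq_add_mul (t := -(b * n / p) - a * n / q) ?_ (by omega) (by omega)
    linear_combination q * Int.emod_def (b * n) p + p * Int.emod_def (a * n) q + n * hab

theorem sum_sum_torusJump_eq_sum_grid (hp : 0 < p) (hq : 0 < q) (hpq : IsCoprime p q) :
    ∑ n ∈ Icc 1 (p * q - 1), ∑ i ∈ Icc 1 n, torusJump p q i =
      ∑ x ∈ Ioc 0 (p - 1), ∑ y ∈ Ioc 0 (q - 1),
        if q * x + p * y < p * q then p * q - (q * x + p * y) else q * x + p * y - 2 * (p * q) := by
  have hIcc : Icc 1 (p * q - 1) = Ioc 0 (p * q - 1) := by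
    simpa using Icc_add_one_left_eq_Ioc (0 : ℤ) (p * q - 1)
  rw [sum_Icc_sum_Icc_eq_sum_zsmul, hIcc, ← sum_filter_of_ne (p := fun n => ¬ p ∣ n ∧ ¬ q ∣ n),
    sum_filter_not_dvd_eq_sum_product hp hq hpq, sum_product]
  · refine sum_congr rfl fun x hx => sum_congr rfl fun y hy => ?_
    rw [mem_Ioc] at hx hy
    rw [sub_add_cancel, smul_eq_mul]
    exact sub_emod_mul_torusJump_emod hpq hx.1 (by omega) hy.1 (by omega)
  · intro n _ h
    refine not_or.mp fun hdvd => h ?_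
    rw [torusJump, if_pos hdvd, smul_zero]

theorem six_mul_sum_sum_torusJump (hp : 0 < p) (hq : 0 < q) (hpq : IsCoprime p q) :
    6 * ∑ n ∈ Icc 1 (p * q - 1), ∑ i ∈ Icc 1 n, torusJump p q i =
      -((p - 1) * (p + 1) * (q - 1) * (q + 1)) := by
  have inner : ∀ x ∈ Ioc 0 (p - 1), 2 * p * ∑ y ∈ Ioc 0 (q - 1),
      (if q * x + p * y < p * q then p * q - (q * x + p * y) else q * x + p * y - 2 * (p * q)) =
      (p ^ 2 * q * (q - 1) - 4 * p * q * (q * x) + 2 * (q * x) ^ 2) +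
        2 * (q * x % p) * (p * (q + 1) - q * x % p) := by
    intro x hx
    rw [mem_Ioc] at hx
    exact two_mul_mul_sum_Ioc_ite hp (by nlinarith) (by nlinarith)
  have total : 2 * p * ∑ n ∈ Icc 1 (p * q - 1), ∑ i ∈ Icc 1 n, torusJump p q i =
      ∑ x ∈ Ioc 0 (p - 1),
        (p ^ 2 * q * (q - 1) + (2 * p * (q + 1) - 4 * p * q ^ 2) * x +
          (2 * q ^ 2 - 2) * x ^ 2) := by
    rw [sum_sum_torusJump_eq_sum_grid hp hq hpq, mul_sum, sum_congr rfl inner, sum_add_distrib,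
      sum_Ioc_mul_emod hp hpq (fun r => 2 * r * (p * (q + 1) - r)), ← sum_add_distrib]
    exact sum_congr rfl fun x _ => by ring
  have closed := six_mul_sum_Ioc_quadratic (p ^ 2 * q * (q - 1)) (2 * p * (q + 1) - 4 * p * q ^ 2)
    (2 * q ^ 2 - 2) (a := 0) (b := p - 1) (by omega)
  refine mul_left_cancel₀ (mul_ne_zero two_ne_zero hp.ne' : 2 * p ≠ 0) ?_
  linear_combination 6 * total + closed

end Coprime

/-- The `L²` signature of the `(p,q)` torus knot: the integral over the unit circle of the
`ω`-signatures, namely `(1/pq) ∑_{n=1}^{pq−1} (2 ∑_{i=1}^{n} j(i))`, equals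
`−(p−1)(p+1)(q−1)(q+1)/(3pq)`. -/
theorem L2_signature_torus_knot
    (p q : ℤ) (hp : 0 < p) (hq : 0 < q) (hpq : IsCoprime p q) :
    (1 / ((p : ℚ) * (q : ℚ))) *
        ∑ n ∈ Finset.Icc (1 : ℤ) (p * q - 1),
          (2 * ∑ i ∈ Finset.Icc (1 : ℤ) n, (torusJump p q i : ℚ)) =
      -(((p : ℚ) - 1) * ((p : ℚ) + 1) * ((q : ℚ) - 1) * ((q : ℚ) + 1)) /
        (3 * (p : ℚ) * (q : ℚ)) := by
  have h : (6 : ℚ) * ∑ n ∈ Icc 1 (p * q - 1), ∑ i ∈ Icc 1 n, (torusJump p q i : ℚ) =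
      -(((p : ℚ) - 1) * ((p : ℚ) + 1) * ((q : ℚ) - 1) * ((q : ℚ) + 1)) := by
    exact_mod_cast six_mul_sum_sum_torusJump hp hq hpq
  have hp0 : (p : ℚ) ≠ 0 := by exact_mod_cast hp.ne'
  have hq0 : (q : ℚ) ≠ 0 := by exact_mod_cast hq.ne'
  rw [← mul_sum]
  field_simp
  linear_combination h
end
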